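/- The upper and lower bounds of the work deficit density are continuous in the state with respect to trace distance: if ‖ρ − ρ′‖_tr ≤ ν then |U_l(ρ) − U_l(ρ′)| ≤ Õ(ν) and |L_l(ρ) − L_l(ρ′)| ≤ Õ(ν), where Õ(ν) denotes O(ν ln ν). -/

import Mathlib

noncomputable section
open scoped BigOperators ComplexOrder

/-- Shannon entropy (natural logarithm), with the convention `0 * log 0 = 0`. -/
def shannon {α : Type*} [Fintype α] (p : α → ℝ) : ℝ := -∑ y, p y * Real.log (p y)

/-- `B` lists the members of an orthonormal basis of `ℂ^d` (the rows `B a` are the basis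
vectors). -/
def ONB {d : ℕ} (B : Fin d → Fin d → ℂ) : Prop :=
  ∀ a b, (∑ i, (starRingEnd ℂ) (B a i) * B b i) = if a = b then 1 else 0

/-- Von Neumann entropy (natural logarithm) of a Hermitian matrix, defined through its
eigenvalues; junk value `0` on non-Hermitian input. -/
def vN {n : Type*} [Fintype n] [DecidableEq n] (ρ : Matrix n n ℂ) : ℝ :=
  if h : ρ.IsHermitian then -∑ i, h.eigenvalues i * Real.log (h.eigenvalues i) else 0

/-- `ρ` is a density matrix. -/
def IsDensity {n : Type*} [Fintype n] [DecidableEq n] (ρ : Matrix n n ℂ) : Prop :=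
  ρ.PosSemidef ∧ ρ.trace = 1

/-- Born-rule joint outcome distribution of the non-adaptive local rank-one projective
measurement with per-party orthonormal bases `B n`, applied to the `N`-party state `ρ`
(each party being `d`-dimensional): `P(Y) = Tr[(Π_{y₁} ⊗ ⋯ ⊗ Π_{y_N}) ρ]`. -/
def locProb {N d : ℕ} (ρ : Matrix (Fin N → Fin d) (Fin N → Fin d) ℂ)
    (B : Fin N → Fin d → Fin d → ℂ) (y : Fin N → Fin d) : ℝ :=
  (∑ s, ∑ t, (∏ n, B n (y n) (s n) * (starRingEnd ℂ) (B n (y n) (t n))) * ρ t s).re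

/-- The multipartite (zero-way) work deficit
`Δ(ρ) = min_{Λ ∈ M_N} H_Λ(Y_N) − S(ρ)`. -/
def deficit {N d : ℕ} (ρ : Matrix (Fin N → Fin d) (Fin N → Fin d) ℂ) : ℝ :=
  sInf {h : ℝ | ∃ B : Fin N → Fin d → Fin d → ℂ,
    (∀ n, ONB (B n)) ∧ h = shannon (locProb ρ B)} - vN ρ

/-- The `l`-site segment of parties starting at position `m*l`
(parties `n` with `m*l ≤ n < m*l + l`). -/
def seg (N m l : ℕ) : Finset (Fin N) :=
  Finset.univ.filter (fun i => m * l ≤ i.val ∧ i.val < m * l + l)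

/-- Born-rule probability of the outcome `y` when the parties in `A` are measured in the local
orthonormal bases `B n` (and nothing is done to the other parties):
`p(y) = Tr[(⊗_{n ∈ A} Π_{y_n} ⊗ 1) ρ]`.  Only the values of `y` on `A` matter. -/
def segProb {N d : ℕ} (ρ : Matrix (Fin N → Fin d) (Fin N → Fin d) ℂ)
    (A : Finset (Fin N)) (B : Fin N → Fin d → Fin d → ℂ) (y : Fin N → Fin d) : ℝ :=
  (∑ s, ∑ t, (∏ n, if n ∈ A then B n (y n) (s n) * (starRingEnd ℂ) (B n (y n) (t n))
      else if s n = t n then (1 : ℂ) else 0) * ρ t s).re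

/-- The outcome distribution of measuring the parties in `A`, recorded as a distribution over
all outcome functions by pinning the outcomes outside `A` to `0`. -/
def segDist {N d : ℕ} [NeZero d] (ρ : Matrix (Fin N → Fin d) (Fin N → Fin d) ℂ)
    (A : Finset (Fin N)) (B : Fin N → Fin d → Fin d → ℂ) (y : Fin N → Fin d) : ℝ :=
  if ∀ n, n ∉ A → y n = 0 then segProb ρ A B y else 0

/-- The upper bound `U_l = (1/N){∑_{n ∈ I_l} min_{Λ ∈ M_{n:l}} H_Λ(Y_{n:l}) − S(ρ)}` for the
work deficit density. -/
def Ubound {N d : ℕ} [NeZero d] (ρ : Matrix (Fin N → Fin d) (Fin N → Fin d) ℂ)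
    (l : ℕ) : ℝ :=
  (1 / (N : ℝ)) * ((∑ m ∈ Finset.range (N / l),
    sInf {h : ℝ | ∃ B : Fin N → Fin d → Fin d → ℂ,
      (∀ n, ONB (B n)) ∧ h = shannon (segDist ρ (seg N m l) B)}) - vN ρ)

/-- `E` is a POVM: positive semidefinite operators summing to the identity. -/
def IsPOVM {ι α : Type*} [Fintype ι] [Fintype α] [DecidableEq α]
    (E : ι → Matrix α α ℂ) : Prop :=
  (∀ z, (E z).PosSemidef) ∧ (∑ z, E z) = 1

/-- Joint Born-rule probability of outcomes `(z, y)` for a protocol in `N_{n:l}`: an arbitrary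
POVM `E` (with outcome `z`) on the prefix parties `{a_i : i < m*l}` together with local
rank-one projective measurements `B` on the segment parties `{a_i : m*l ≤ i < m*l + l}`. -/
def prefSegProb {N d : ℕ} (ρ : Matrix (Fin N → Fin d) (Fin N → Fin d) ℂ) (m l : ℕ)
    {Z : Type} [Fintype Z]
    (E : Z → Matrix (Fin (min (m * l) N) → Fin d) (Fin (min (m * l) N) → Fin d) ℂ)
    (B : Fin N → Fin d → Fin d → ℂ) (z : Z) (y : Fin N → Fin d) : ℝ :=
  (∑ s, ∑ t, E z (fun i => s (Fin.castLE (Nat.min_le_right _ _) i))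
      (fun i => t (Fin.castLE (Nat.min_le_right _ _) i)) *
      (∏ n, if n ∈ seg N m l then B n (y n) (s n) * (starRingEnd ℂ) (B n (y n) (t n))
        else if n.val < m * l then (1 : ℂ) else if s n = t n then (1 : ℂ) else 0) * ρ t s).re

/-- Joint outcome distribution of a protocol in `N_{n:l}`, with segment-external projective
outcomes pinned to `0`. -/
def prefSegDist {N d : ℕ} [NeZero d] (ρ : Matrix (Fin N → Fin d) (Fin N → Fin d) ℂ)
    (m l : ℕ) {Z : Type} [Fintype Z]
    (E : Z → Matrix (Fin (min (m * l) N) → Fin d) (Fin (min (m * l) N) → Fin d) ℂ)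
    (B : Fin N → Fin d → Fin d → ℂ) (zy : Z × (Fin N → Fin d)) : ℝ :=
  if ∀ n, n ∉ seg N m l → zy.2 n = 0 then prefSegProb ρ m l E B zy.1 zy.2 else 0

/-- Conditional Shannon entropy `H(Y|Z) = H(Z,Y) − H(Z)` of a joint distribution. -/
def condShannon {Z Y' : Type*} [Fintype Z] [Fintype Y'] (p : Z × Y' → ℝ) : ℝ :=
  shannon p - shannon (fun z => ∑ y, p (z, y))

/-- The lower bound `L_l = (1/N){∑_{n ∈ I_l} min_{Λ ∈ N_{n:l}} H_Λ(Y_{n:l}|Z_n) − S(ρ)}` for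
the work deficit density. -/
def Lbound {N d : ℕ} [NeZero d] (ρ : Matrix (Fin N → Fin d) (Fin N → Fin d) ℂ)
    (l : ℕ) : ℝ :=
  (1 / (N : ℝ)) * ((∑ m ∈ Finset.range (N / l),
    sInf {h : ℝ | ∃ (Z : Type) (_ : Fintype Z)
      (E : Z → Matrix (Fin (min (m * l) N) → Fin d) (Fin (min (m * l) N) → Fin d) ℂ)
      (B : Fin N → Fin d → Fin d → ℂ),
      IsPOVM E ∧ (∀ n, ONB (B n)) ∧
      h = condShannon (prefSegDist ρ m l E B)}) - vN ρ)

/-- Trace norm of a Hermitian matrix (sum of the absolute values of its eigenvalues);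
junk value `0` on non-Hermitian input. -/
def trNorm {n : Type*} [Fintype n] [DecidableEq n] (A : Matrix n n ℂ) : ℝ :=
  if h : A.IsHermitian then ∑ i, |h.eigenvalues i| else 0

/-!
Every entropy in `U_l` and `L_l` is the Shannon or conditional Shannon entropy of the outcome
distribution of a POVM applied to the state. So, in effect, is `S(ρ)`: it equals the entropy of the
measurement in an eigenbasis of `ρ` and is at most that of any measurement by unit-trace elements,
whose eigenweights form a doubly stochastic matrix. Born probabilities are trace-norm contractive,
so `ρ` and `ρ'` give outcome distributions that are `ν`-close in `ℓ¹`, and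
`|x log x - y log y| ≤ ψ |x - y|` with `ψ t = t (2 - log t)` makes every Shannon entropy
`ψ`-continuous; for conditional entropies the chain rule and the concavity of `ψ` reduce to this
case. A uniform bound survives minimisation over protocols.
-/

open Finset Real

-- The `2` (rather than `1`) makes the modulus monotone on `[0, 2]`, which the conditional
-- estimate at `2 * ν` needs.
def fannesModulus (t : ℝ) : ℝ := t * (2 - log t)

lemma fannesModulus_le_fannesModulus {a b : ℝ} (ha : 0 ≤ a) (hab : a ≤ b) (hb : b ≤ 2) :
    fannesModulus a ≤ fannesModulus b := by
  rcases ha.eq_or_lt with rfl | ha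
  · have : log b ≤ 2 := by
      rcases (ha.trans hab).eq_or_lt with rfl | hb0
      · simp
      · linarith [log_le_sub_one_of_pos hb0]
    simp only [fannesModulus, zero_mul]
    nlinarith
  have hb0 : 0 < b := ha.trans_le hab
  have h1 : a * (log b - log a) ≤ b - a := by
    rw [← log_div hb0.ne' ha.ne']
    have := mul_le_mul_of_nonneg_left (log_le_sub_one_of_pos (div_pos hb0 ha)) ha.le
    rwa [mul_sub, mul_div_cancel₀ _ ha.ne', mul_one] at this
  have h2 : log b ≤ 1 := by linarith [log_le_sub_one_of_pos hb0]
  simp only [fannesModulus]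
  nlinarith [mul_le_mul_of_nonneg_left h2 (sub_nonneg.mpr hab)]

lemma concaveOn_fannesModulus : ConcaveOn ℝ (Set.Ici 0) fannesModulus := by
  have h : fannesModulus = negMulLog + fun t => 2 * t := by
    ext t
    simp only [fannesModulus, negMulLog, Pi.add_apply]
    ring
  exact h ▸ concaveOn_negMulLog.add ((concaveOn_id (convex_Ici 0)).smul zero_le_two)

lemma abs_mul_log_sub_mul_log_le_of_le {x y : ℝ} (hy : 0 ≤ y) (hyx : y ≤ x) (hx : x ≤ 1) :
    |x * log x - y * log y| ≤ fannesModulus (x - y) := by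
  rcases hyx.eq_or_lt with rfl | hlt
  · simp [fannesModulus]
  set ε := x - y with hε
  have hε0 : 0 < ε := sub_pos.mpr hlt
  have hx0 : 0 < x := hy.trans_lt hlt
  have hlogε : log ε ≤ log x := log_le_log hε0 (by linarith)
  have hlogx : log x ≤ 0 := log_nonpos hx0.le hx
  have upper : x * log x - y * log y ≤ ε := by
    rcases hy.eq_or_lt with rfl | hy0
    · simp only [zero_mul, sub_zero]; nlinarith
    have : y * (log x - log y) ≤ ε := by
      rw [← log_div hx0.ne' hy0.ne']
      have := mul_le_mul_of_nonneg_left (log_le_sub_one_of_pos (div_pos hx0 hy0)) hy0.le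
      rwa [mul_sub, mul_div_cancel₀ _ hy0.ne', mul_one] at this
    nlinarith
  have lower : ε * log ε ≤ x * log x - y * log y := by
    rcases hy.eq_or_lt with rfl | hy0
    · simp only [zero_mul, sub_zero]; nlinarith [mul_le_mul_of_nonneg_left hlogε hε0.le]
    nlinarith [log_le_log hy0 hyx, mul_le_mul_of_nonneg_left hlogε hε0.le]
  rw [abs_le, fannesModulus]
  constructor <;> nlinarith

lemma abs_mul_log_sub_mul_log_le {x y : ℝ} (hx0 : 0 ≤ x) (hx1 : x ≤ 1) (hy0 : 0 ≤ y)
    (hy1 : y ≤ 1) : |x * log x - y * log y| ≤ fannesModulus |x - y| := by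
  rcases le_total y x with h | h
  · rw [abs_of_nonneg (sub_nonneg.mpr h)]
    exact abs_mul_log_sub_mul_log_le_of_le hy0 h hx1
  · rw [abs_sub_comm, abs_sub_comm x, abs_of_nonneg (sub_nonneg.mpr h)]
    exact abs_mul_log_sub_mul_log_le_of_le hx0 h hy1

section Shannon

variable {α : Type*} [Fintype α] {p q : α → ℝ}

lemma shannon_eq_sum_negMulLog (p : α → ℝ) : shannon p = ∑ i, negMulLog (p i) := by
  simp [shannon, negMulLog]

lemma le_one_of_sum_le_one (h0 : ∀ i, 0 ≤ p i) (h1 : ∑ i, p i ≤ 1) (j : α) : p j ≤ 1 :=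
  (single_le_sum (fun i _ => h0 i) (mem_univ j)).trans h1

lemma shannon_nonneg (h0 : ∀ i, 0 ≤ p i) (h1 : ∑ i, p i ≤ 1) : 0 ≤ shannon p := by
  rw [shannon_eq_sum_negMulLog]
  exact sum_nonneg fun i _ => negMulLog_nonneg (h0 i) (le_one_of_sum_le_one h0 h1 i)

lemma shannon_le_log_card (h0 : ∀ i, 0 ≤ p i) (h1 : ∑ i, p i = 1) :
    shannon p ≤ log (Fintype.card α) := by
  have : Nonempty α := by
    by_contra h
    simp [not_nonempty_iff.mp h] at h1
  have hK : (0 : ℝ) < Fintype.card α := by exact_mod_cast Fintype.card_pos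
  have hj := concaveOn_negMulLog.le_map_sum (t := univ) (w := fun _ => (Fintype.card α : ℝ)⁻¹)
    (p := p) (fun _ _ => by positivity) (by simp [card_univ, hK.ne']) (fun i _ => h0 i)
  simp only [smul_eq_mul, ← mul_sum, h1, mul_one] at hj
  rw [negMulLog, log_inv, neg_mul, mul_neg, neg_neg] at hj
  rw [shannon_eq_sum_negMulLog]
  exact le_of_mul_le_mul_left (by linarith) (inv_pos.mpr hK)

lemma abs_shannon_sub_le (hp0 : ∀ i, 0 ≤ p i) (hp1 : ∑ i, p i ≤ 1) (hq0 : ∀ i, 0 ≤ q i)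
    (hq1 : ∑ i, q i ≤ 1) {δ : ℝ} (hpq : ∑ i, |p i - q i| ≤ δ) (hδ : δ ≤ 2) :
    |shannon p - shannon q| ≤ Fintype.card α * fannesModulus δ := by
  have hterm : ∀ i, |q i * log (q i) - p i * log (p i)| ≤ fannesModulus δ := fun i =>
    (abs_mul_log_sub_mul_log_le (hq0 i) (le_one_of_sum_le_one hq0 hq1 i) (hp0 i)
      (le_one_of_sum_le_one hp0 hp1 i)).trans <|
      fannesModulus_le_fannesModulus (abs_nonneg _)
        (by rw [abs_sub_comm]
            exact (single_le_sum (f := fun i => |p i - q i|) (fun _ _ => abs_nonneg _)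
              (mem_univ i)).trans hpq) hδ
  calc |shannon p - shannon q| = |∑ i, (q i * log (q i) - p i * log (p i))| := by
        simp only [shannon, sum_sub_distrib]; ring_nf
    _ ≤ ∑ i, |q i * log (q i) - p i * log (p i)| := abs_sum_le_sum_abs _ _
    _ ≤ Fintype.card α * fannesModulus δ := by
        simpa using sum_le_sum fun i (_ : i ∈ univ) => hterm i

end Shannon

section Conditional

variable {Z Y : Type*} [Fintype Y] {p q : Z × Y → ℝ}

def margFst (p : Z × Y → ℝ) (z : Z) : ℝ := ∑ y, p (z, y)

def condDist (p : Z × Y → ℝ) (z : Z) (y : Y) : ℝ := p (z, y) / margFst p z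

lemma margFst_nonneg (h0 : ∀ zy, 0 ≤ p zy) (z : Z) : 0 ≤ margFst p z :=
  sum_nonneg fun y _ => h0 (z, y)

lemma sum_margFst [Fintype Z] (p : Z × Y → ℝ) : ∑ z, margFst p z = ∑ zy, p zy :=
  (Fintype.sum_prod_type p).symm

lemma eq_zero_of_margFst_eq_zero (h0 : ∀ zy, 0 ≤ p zy) {z : Z} (hz : margFst p z = 0)
    (y : Y) : p (z, y) = 0 :=
  (sum_eq_zero_iff_of_nonneg fun y _ => h0 (z, y)).mp hz y (mem_univ y)

lemma margFst_mul_condDist (h0 : ∀ zy, 0 ≤ p zy) (z : Z) (y : Y) :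
    margFst p z * condDist p z y = p (z, y) := by
  by_cases hz : margFst p z = 0
  · simp [hz, eq_zero_of_margFst_eq_zero h0 hz]
  · exact mul_div_cancel₀ _ hz

lemma condDist_nonneg (h0 : ∀ zy, 0 ≤ p zy) (z : Z) (y : Y) : 0 ≤ condDist p z y :=
  div_nonneg (h0 (z, y)) (margFst_nonneg h0 z)

lemma sum_condDist (hz : margFst p z ≠ 0) : ∑ y, condDist p z y = 1 := by
  simp only [condDist, ← sum_div]
  exact div_self hz

lemma sum_condDist_le_one (p : Z × Y → ℝ) (z : Z) : ∑ y, condDist p z y ≤ 1 := by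
  by_cases hz : margFst p z = 0
  · simp [condDist, hz]
  · exact (sum_condDist hz).le

lemma shannon_condDist_le_log_card (h0 : ∀ zy, 0 ≤ p zy) (z : Z) :
    shannon (condDist p z) ≤ log (Fintype.card Y) := by
  by_cases hz : margFst p z = 0
  · simp [shannon, condDist, hz, log_natCast_nonneg]
  · exact shannon_le_log_card (condDist_nonneg h0 z) (sum_condDist hz)

lemma margFst_mul_negMulLog_condDist (h0 : ∀ zy, 0 ≤ p zy) (z : Z) (y : Y) :
    margFst p z * negMulLog (condDist p z y)
      = negMulLog (p (z, y)) + p (z, y) * log (margFst p z) := by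
  by_cases hz : margFst p z = 0
  · simp [hz, eq_zero_of_margFst_eq_zero h0 hz]
  by_cases hp : p (z, y) = 0
  · simp [condDist, hp]
  rw [condDist, negMulLog, negMulLog, log_div hp hz]
  field_simp
  ring

lemma condShannon_eq_sum [Fintype Z] (h0 : ∀ zy, 0 ≤ p zy) :
    condShannon p = ∑ z, margFst p z * shannon (condDist p z) := by
  have hz : ∀ z, margFst p z * shannon (condDist p z)
      = ∑ y, negMulLog (p (z, y)) - negMulLog (margFst p z) := by
    intro z
    simp only [shannon_eq_sum_negMulLog, mul_sum, margFst_mul_negMulLog_condDist h0,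
      sum_add_distrib, ← sum_mul]
    rw [negMulLog, margFst]
    ring
  rw [sum_congr rfl fun z _ => hz z, sum_sub_distrib, condShannon, shannon_eq_sum_negMulLog,
    shannon_eq_sum_negMulLog, Fintype.sum_prod_type]
  rfl

lemma condShannon_nonneg [Fintype Z] (h0 : ∀ zy, 0 ≤ p zy) : 0 ≤ condShannon p := by
  rw [condShannon_eq_sum h0]
  exact sum_nonneg fun z _ => mul_nonneg (margFst_nonneg h0 z)
    (shannon_nonneg (condDist_nonneg h0 z) (sum_condDist_le_one p z))

lemma abs_margFst_sub_le (p q : Z × Y → ℝ) (z : Z) :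
    |margFst p z - margFst q z| ≤ ∑ y, |p (z, y) - q (z, y)| := by
  rw [margFst, margFst, ← sum_sub_distrib]
  exact abs_sum_le_sum_abs _ _

lemma margFst_mul_sum_abs_condDist_sub_le (hp0 : ∀ zy, 0 ≤ p zy) (hq0 : ∀ zy, 0 ≤ q zy)
    (z : Z) :
    margFst p z * ∑ y, |condDist p z y - condDist q z y|
      ≤ 2 * ∑ y, |p (z, y) - q (z, y)| := by
  -- compare `p(z,·)` with `p(z) q(·|z)`, which differs from `q(z,·)` by `(p(z) - q(z)) q(·|z)`
  have hy : ∀ y, margFst p z * |condDist p z y - condDist q z y|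
      ≤ |p (z, y) - q (z, y)| + |margFst p z - margFst q z| * condDist q z y := by
    intro y
    calc margFst p z * |condDist p z y - condDist q z y|
        = |(p (z, y) - q (z, y)) + (margFst q z - margFst p z) * condDist q z y| := by
          rw [← abs_of_nonneg (margFst_nonneg hp0 z), ← abs_mul, sub_mul,
            margFst_mul_condDist hq0, abs_of_nonneg (margFst_nonneg hp0 z), mul_sub,
            margFst_mul_condDist hp0]
          ring_nf
      _ ≤ |p (z, y) - q (z, y)| + |margFst p z - margFst q z| * condDist q z y := by
          refine (abs_add_le _ _).trans_eq ?_
          rw [abs_mul, abs_of_nonneg (condDist_nonneg hq0 z y), abs_sub_comm (margFst q z)]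
  calc margFst p z * ∑ y, |condDist p z y - condDist q z y|
      ≤ ∑ y, (|p (z, y) - q (z, y)| + |margFst p z - margFst q z| * condDist q z y) := by
        rw [mul_sum]; exact sum_le_sum fun y _ => hy y
    _ = ∑ y, |p (z, y) - q (z, y)| + |margFst p z - margFst q z| * ∑ y, condDist q z y := by
        rw [sum_add_distrib, mul_sum]
    _ ≤ ∑ y, |p (z, y) - q (z, y)| + (∑ y, |p (z, y) - q (z, y)|) * 1 := by
        gcongr
        · exact sum_nonneg fun y _ => condDist_nonneg hq0 z y
        · exact abs_margFst_sub_le p q z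
        · exact sum_condDist_le_one q z
    _ = 2 * ∑ y, |p (z, y) - q (z, y)| := by ring

lemma sum_abs_condDist_sub_le_two (hp0 : ∀ zy, 0 ≤ p zy) (hq0 : ∀ zy, 0 ≤ q zy) (z : Z) :
    ∑ y, |condDist p z y - condDist q z y| ≤ 2 := by
  calc ∑ y, |condDist p z y - condDist q z y| ≤ ∑ y, (condDist p z y + condDist q z y) :=
        sum_le_sum fun y _ => (abs_sub _ _).trans_eq <| by
          rw [abs_of_nonneg (condDist_nonneg hp0 z y), abs_of_nonneg (condDist_nonneg hq0 z y)]
    _ ≤ 2 := by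
        rw [sum_add_distrib]
        linarith [sum_condDist_le_one p z, sum_condDist_le_one q z]

lemma abs_sum_margFst_sub_mul_shannon_le [Fintype Z] (hq0 : ∀ zy, 0 ≤ q zy) {ν : ℝ}
    (hpq : ∑ zy, |p zy - q zy| ≤ ν) :
    |∑ z, (margFst p z - margFst q z) * shannon (condDist q z)| ≤ log (Fintype.card Y) * ν := by
  have hmarg : ∑ z, |margFst p z - margFst q z| ≤ ν := by
    refine (sum_le_sum fun z _ => abs_margFst_sub_le p q z).trans ?_
    rwa [← Fintype.sum_prod_type (f := fun zy => |p zy - q zy|)]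
  calc _ ≤ ∑ z, |margFst p z - margFst q z| * log (Fintype.card Y) := by
        refine (abs_sum_le_sum_abs _ _).trans (sum_le_sum fun z _ => ?_)
        rw [abs_mul, abs_of_nonneg (shannon_nonneg (condDist_nonneg hq0 z)
          (sum_condDist_le_one q z))]
        exact mul_le_mul_of_nonneg_left (shannon_condDist_le_log_card hq0 z) (abs_nonneg _)
    _ ≤ log (Fintype.card Y) * ν := by
        rw [← sum_mul, mul_comm]
        exact mul_le_mul_of_nonneg_left hmarg (log_natCast_nonneg _)

lemma abs_sum_margFst_mul_shannon_sub_le [Fintype Z] (hp0 : ∀ zy, 0 ≤ p zy)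
    (hp1 : ∑ zy, p zy = 1) (hq0 : ∀ zy, 0 ≤ q zy) {ν : ℝ} (hν : ν ≤ 1)
    (hpq : ∑ zy, |p zy - q zy| ≤ ν) :
    |∑ z, margFst p z * (shannon (condDist p z) - shannon (condDist q z))|
      ≤ Fintype.card Y * fannesModulus (2 * ν) := by
  set δ : Z → ℝ := fun z => ∑ y, |condDist p z y - condDist q z y|
  have hδ0 : ∀ z, 0 ≤ δ z := fun z => sum_nonneg fun y _ => abs_nonneg _
  have hweighted : ∑ z, margFst p z * δ z ≤ 2 * ν := by
    calc ∑ z, margFst p z * δ z ≤ ∑ z, 2 * ∑ y, |p (z, y) - q (z, y)| :=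
          sum_le_sum fun z _ => margFst_mul_sum_abs_condDist_sub_le hp0 hq0 z
      _ ≤ 2 * ν := by
          rw [← mul_sum, ← Fintype.sum_prod_type (f := fun zy => |p zy - q zy|)]
          linarith
  have hjensen : ∑ z, margFst p z * fannesModulus (δ z)
      ≤ fannesModulus (∑ z, margFst p z * δ z) := by
    simpa using concaveOn_fannesModulus.le_map_sum (t := univ)
      (fun z _ => margFst_nonneg hp0 z) (by rw [sum_margFst, hp1])
      (fun z _ => Set.mem_Ici.mpr (hδ0 z))
  calc _ ≤ ∑ z, margFst p z * (Fintype.card Y * fannesModulus (δ z)) := by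
        refine (abs_sum_le_sum_abs _ _).trans (sum_le_sum fun z _ => ?_)
        rw [abs_mul, abs_of_nonneg (margFst_nonneg hp0 z)]
        exact mul_le_mul_of_nonneg_left (abs_shannon_sub_le (condDist_nonneg hp0 z)
          (sum_condDist_le_one p z) (condDist_nonneg hq0 z) (sum_condDist_le_one q z) le_rfl
          (sum_abs_condDist_sub_le_two hp0 hq0 z)) (margFst_nonneg hp0 z)
    _ = Fintype.card Y * ∑ z, margFst p z * fannesModulus (δ z) := by
        rw [mul_sum]
        exact sum_congr rfl fun z _ => by ring
    _ ≤ Fintype.card Y * fannesModulus (2 * ν) := by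
        gcongr
        exact hjensen.trans <| fannesModulus_le_fannesModulus
          (sum_nonneg fun z _ => mul_nonneg (margFst_nonneg hp0 z) (hδ0 z)) hweighted
          (by linarith)

lemma abs_condShannon_sub_le [Fintype Z] (hp0 : ∀ zy, 0 ≤ p zy) (hp1 : ∑ zy, p zy = 1)
    (hq0 : ∀ zy, 0 ≤ q zy) {ν : ℝ} (hν : ν ≤ 1) (hpq : ∑ zy, |p zy - q zy| ≤ ν) :
    |condShannon p - condShannon q|
      ≤ log (Fintype.card Y) * ν + Fintype.card Y * fannesModulus (2 * ν) := by
  have hsplit : condShannon p - condShannon q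
      = ∑ z, (margFst p z - margFst q z) * shannon (condDist q z)
        + ∑ z, margFst p z * (shannon (condDist p z) - shannon (condDist q z)) := by
    rw [condShannon_eq_sum hp0, condShannon_eq_sum hq0, ← sum_add_distrib, ← sum_sub_distrib]
    exact sum_congr rfl fun z _ => by ring
  rw [hsplit]
  exact (abs_add_le _ _).trans (add_le_add (abs_sum_margFst_sub_mul_shannon_le hq0 hpq)
    (abs_sum_margFst_mul_shannon_sub_le hp0 hp1 hq0 hν hpq))

end Conditional

section Born

open Matrix

variable {β : Type*} [Fintype β]

def born (M ρ : Matrix β β ℂ) : ℝ := (M * ρ).trace.re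

lemma born_sub (M ρ ρ' : Matrix β β ℂ) : born M (ρ - ρ') = born M ρ - born M ρ' := by
  simp [born, Matrix.mul_sub, Matrix.trace_sub]

lemma born_eq_sum (M ρ : Matrix β β ℂ) :
    born M ρ = (∑ s, ∑ t, M s t * ρ t s).re := by
  simp [born, Matrix.trace, mul_apply]

variable [DecidableEq β]

def eigenWeight {Δ : Matrix β β ℂ} (hΔ : Δ.IsHermitian) (M : Matrix β β ℂ) (j : β) : ℝ :=
  ((star (hΔ.eigenvectorUnitary : Matrix β β ℂ) * M * hΔ.eigenvectorUnitary) j j).re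

lemma born_eq_sum_eigenvalues_mul_eigenWeight {Δ : Matrix β β ℂ} (hΔ : Δ.IsHermitian)
    (M : Matrix β β ℂ) : born M Δ = ∑ j, hΔ.eigenvalues j * eigenWeight hΔ M j := by
  set U : Matrix β β ℂ := ↑hΔ.eigenvectorUnitary
  have hdiag : star U * Δ * U = diagonal (RCLike.ofReal ∘ hΔ.eigenvalues) := by
    rw [← hΔ.conjStarAlgAut_star_eigenvectorUnitary, Unitary.conjStarAlgAut_star_apply]
  have hU : U * star U = 1 := Unitary.mul_star_self_of_mem hΔ.eigenvectorUnitary.2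
  have : (M * Δ).trace = (star U * M * U * (star U * Δ * U)).trace := by
    rw [show star U * M * U * (star U * Δ * U) = star U * (M * (U * star U) * Δ) * U by
      simp only [Matrix.mul_assoc], hU, Matrix.mul_one, Matrix.trace_mul_cycle, hU,
      Matrix.one_mul]
  rw [born, this, hdiag, Matrix.trace, Complex.re_sum]
  refine sum_congr rfl fun j _ => ?_
  simp [mul_diagonal, eigenWeight, U, mul_comm]

lemma eigenWeight_nonneg {Δ M : Matrix β β ℂ} (hΔ : Δ.IsHermitian) (hM : M.PosSemidef)
    (j : β) : 0 ≤ eigenWeight hΔ M j := by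
  have := (hM.conjTranspose_mul_mul_same (hΔ.eigenvectorUnitary : Matrix β β ℂ)).diag_nonneg
    (i := j)
  exact (Complex.nonneg_iff.mp this).1

lemma sum_eigenWeight_eq_re_trace {Δ : Matrix β β ℂ} (hΔ : Δ.IsHermitian) (M : Matrix β β ℂ) :
    ∑ j, eigenWeight hΔ M j = M.trace.re := by
  calc ∑ j, eigenWeight hΔ M j
      = (star (hΔ.eigenvectorUnitary : Matrix β β ℂ) * M * hΔ.eigenvectorUnitary).trace.re := by
        simp [eigenWeight, Matrix.trace, Complex.re_sum]
    _ = M.trace.re := by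
        rw [Matrix.trace_mul_cycle, Unitary.mul_star_self_of_mem hΔ.eigenvectorUnitary.2,
          Matrix.one_mul]

lemma IsPOVM.sum_eigenWeight {ι : Type*} [Fintype ι] {E : ι → Matrix β β ℂ} (hE : IsPOVM E)
    {Δ : Matrix β β ℂ} (hΔ : Δ.IsHermitian) (j : β) : ∑ i, eigenWeight hΔ (E i) j = 1 := by
  simp only [eigenWeight, ← Complex.re_sum, ← Matrix.sum_apply, ← Matrix.mul_sum,
    ← Matrix.sum_mul, hE.2, Matrix.mul_one, Unitary.star_mul_self_of_mem hΔ.eigenvectorUnitary.2,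
    Matrix.one_apply_eq, Complex.one_re]

lemma born_nonneg {M ρ : Matrix β β ℂ} (hM : M.PosSemidef) (hρ : ρ.PosSemidef) :
    0 ≤ born M ρ := by
  rw [born_eq_sum_eigenvalues_mul_eigenWeight hρ.1]
  exact sum_nonneg fun j _ => mul_nonneg (hρ.eigenvalues_nonneg j) (eigenWeight_nonneg _ hM j)

lemma IsPOVM.sum_born {ι : Type*} [Fintype ι] {E : ι → Matrix β β ℂ} (hE : IsPOVM E)
    {ρ : Matrix β β ℂ} (hρ : ρ.trace = 1) : ∑ i, born (E i) ρ = 1 := by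
  simp only [born, ← Complex.re_sum, ← Matrix.trace_sum, ← Matrix.sum_mul, hE.2,
    Matrix.one_mul, hρ, Complex.one_re]

lemma IsPOVM.sum_abs_born_sub_le_trNorm {ι : Type*} [Fintype ι] {E : ι → Matrix β β ℂ}
    (hE : IsPOVM E) {ρ ρ' : Matrix β β ℂ} (hρ : ρ.IsHermitian) (hρ' : ρ'.IsHermitian) :
    ∑ i, |born (E i) ρ - born (E i) ρ'| ≤ trNorm (ρ - ρ') := by
  have hΔ := hρ.sub hρ'
  calc ∑ i, |born (E i) ρ - born (E i) ρ'|
      = ∑ i, |∑ j, hΔ.eigenvalues j * eigenWeight hΔ (E i) j| := by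
        simp only [← born_sub, born_eq_sum_eigenvalues_mul_eigenWeight hΔ]
    _ ≤ ∑ i, ∑ j, |hΔ.eigenvalues j| * eigenWeight hΔ (E i) j := by
        refine sum_le_sum fun i _ => (abs_sum_le_sum_abs _ _).trans_eq <| sum_congr rfl
          fun j _ => by rw [abs_mul, abs_of_nonneg (eigenWeight_nonneg hΔ (hE.1 i) j)]
    _ = ∑ j, |hΔ.eigenvalues j| := by
        rw [sum_comm]
        simp only [← mul_sum, hE.sum_eigenWeight, mul_one]
    _ = trNorm (ρ - ρ') := by rw [trNorm, dif_pos hΔ]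

lemma IsPOVM.abs_shannon_born_sub_le {ι : Type*} [Fintype ι] {E : ι → Matrix β β ℂ}
    (hE : IsPOVM E) {ρ ρ' : Matrix β β ℂ} (hρ : IsDensity ρ) (hρ' : IsDensity ρ') {ν : ℝ}
    (hν : ν ≤ 2) (htr : trNorm (ρ - ρ') ≤ ν) :
    |shannon (fun i => born (E i) ρ) - shannon (fun i => born (E i) ρ')|
      ≤ Fintype.card ι * fannesModulus ν :=
  abs_shannon_sub_le (fun i => born_nonneg (hE.1 i) hρ.1) (hE.sum_born hρ.2).le
    (fun i => born_nonneg (hE.1 i) hρ'.1) (hE.sum_born hρ'.2).le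
    ((hE.sum_abs_born_sub_le_trNorm hρ.1.1 hρ'.1.1).trans htr) hν

lemma IsPOVM.abs_condShannon_born_sub_le {Z Y : Type*} [Fintype Z] [Fintype Y]
    {E : Z × Y → Matrix β β ℂ} (hE : IsPOVM E) {ρ ρ' : Matrix β β ℂ} (hρ : IsDensity ρ)
    (hρ' : IsDensity ρ') {ν : ℝ} (hν : ν ≤ 1) (htr : trNorm (ρ - ρ') ≤ ν) :
    |condShannon (fun zy => born (E zy) ρ) - condShannon (fun zy => born (E zy) ρ')|
      ≤ log (Fintype.card Y) * ν + Fintype.card Y * fannesModulus (2 * ν) :=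
  abs_condShannon_sub_le (fun zy => born_nonneg (hE.1 zy) hρ.1) (hE.sum_born hρ.2)
    (fun zy => born_nonneg (hE.1 zy) hρ'.1) hν
    ((hE.sum_abs_born_sub_le_trNorm hρ.1.1 hρ'.1.1).trans htr)

end Born

section VonNeumann

open Matrix

variable {β : Type*} [Fintype β] [DecidableEq β]

lemma vN_eq_sum_negMulLog {σ : Matrix β β ℂ} (hσ : σ.IsHermitian) :
    vN σ = ∑ j, negMulLog (hσ.eigenvalues j) := by
  simp [vN, hσ, negMulLog]

lemma sum_negMulLog_le_sum_negMulLog_mulVec {D : Matrix β β ℝ} (hD : D ∈ doublyStochastic ℝ β)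
    {μ : β → ℝ} (hμ : ∀ k, 0 ≤ μ k) : ∑ k, negMulLog (μ k) ≤ ∑ j, negMulLog ((D *ᵥ μ) j) :=
  calc ∑ k, negMulLog (μ k) = ∑ j, ∑ k, D j k * negMulLog (μ k) := by
        rw [sum_comm]
        simp only [← sum_mul, sum_col_of_mem_doublyStochastic hD, one_mul]
    _ ≤ ∑ j, negMulLog ((D *ᵥ μ) j) := sum_le_sum fun j _ => by
        simpa [mulVec, dotProduct] using concaveOn_negMulLog.le_map_sum (t := univ)
          (fun k _ => nonneg_of_mem_doublyStochastic hD) (sum_row_of_mem_doublyStochastic hD j)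
          (fun k _ => Set.mem_Ici.mpr (hμ k))

lemma IsPOVM.vN_le_shannon_born {E : β → Matrix β β ℂ} (hE : IsPOVM E)
    (htr : ∀ i, (E i).trace = 1) {σ : Matrix β β ℂ} (hσ : σ.PosSemidef) :
    vN σ ≤ shannon (fun i => born (E i) σ) := by
  have hD : Matrix.of (fun i j => eigenWeight hσ.1 (E i) j) ∈ doublyStochastic ℝ β := by
    refine mem_doublyStochastic_iff_sum.mpr ⟨fun i j => eigenWeight_nonneg hσ.1 (hE.1 i) j,
      fun i => by simpa [htr] using sum_eigenWeight_eq_re_trace hσ.1 (E i), hE.sum_eigenWeight hσ.1⟩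
  calc vN σ = ∑ k, negMulLog (hσ.1.eigenvalues k) := vN_eq_sum_negMulLog hσ.1
    _ ≤ ∑ i, negMulLog ((of (fun i j => eigenWeight hσ.1 (E i) j) *ᵥ hσ.1.eigenvalues) i) :=
        sum_negMulLog_le_sum_negMulLog_mulVec hD hσ.eigenvalues_nonneg
    _ = shannon (fun i => born (E i) σ) := by
        simp only [shannon_eq_sum_negMulLog, born_eq_sum_eigenvalues_mul_eigenWeight hσ.1,
          mulVec, dotProduct, of_apply, mul_comm]

def eigenProj {σ : Matrix β β ℂ} (hσ : σ.IsHermitian) (j : β) : Matrix β β ℂ :=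
  (hσ.eigenvectorUnitary : Matrix β β ℂ) * diagonal (Pi.single j 1) *
    star (hσ.eigenvectorUnitary : Matrix β β ℂ)

lemma isPOVM_eigenProj {σ : Matrix β β ℂ} (hσ : σ.IsHermitian) : IsPOVM (eigenProj hσ) := by
  have hU := Unitary.mul_star_self_of_mem hσ.eigenvectorUnitary.2
  refine ⟨fun j => ?_, ?_⟩
  · exact (PosSemidef.diagonal fun k => by by_cases hk : k = j <;> simp [hk])
      |>.mul_mul_conjTranspose_same _
  · simp only [eigenProj]
    have hsum : ∑ j, diagonal (Pi.single j 1 : β → ℂ) = 1 := by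
      ext a b
      by_cases hab : a = b <;> simp [Matrix.sum_apply, one_apply, Pi.single_apply, hab]
    rw [← Matrix.sum_mul, ← Matrix.mul_sum, hsum, Matrix.mul_one, hU]

lemma trace_eigenProj {σ : Matrix β β ℂ} (hσ : σ.IsHermitian) (j : β) :
    (eigenProj hσ j).trace = 1 := by
  rw [eigenProj, trace_mul_cycle, Unitary.star_mul_self_of_mem hσ.eigenvectorUnitary.2,
    one_mul, trace_diagonal]
  simp

lemma born_eigenProj {σ : Matrix β β ℂ} (hσ : σ.IsHermitian) (j : β) :
    born (eigenProj hσ j) σ = hσ.eigenvalues j := by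
  have hU := Unitary.star_mul_self_of_mem hσ.eigenvectorUnitary.2
  have hw : ∀ k, eigenWeight hσ (eigenProj hσ j) k = if k = j then 1 else 0 := by
    intro k
    simp only [eigenWeight, eigenProj, ← Matrix.mul_assoc, hU, Matrix.one_mul]
    simp only [Matrix.mul_assoc, hU, Matrix.mul_one]
    by_cases hk : k = j <;> simp [hk]
  simp [born_eq_sum_eigenvalues_mul_eigenWeight hσ, hw]

lemma vN_eq_shannon_born_eigenProj {σ : Matrix β β ℂ} (hσ : σ.IsHermitian) :
    vN σ = shannon (fun j => born (eigenProj hσ j) σ) := by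
  simp only [born_eigenProj, vN, dif_pos hσ, shannon]

lemma abs_vN_sub_le {ρ ρ' : Matrix β β ℂ} (hρ : IsDensity ρ) (hρ' : IsDensity ρ') {ν : ℝ}
    (hν : ν ≤ 2) (htr : trNorm (ρ - ρ') ≤ ν) :
    |vN ρ - vN ρ'| ≤ Fintype.card β * fannesModulus ν := by
  -- measure both states in the eigenbasis of either one
  have hP := isPOVM_eigenProj hρ.1.1
  have hP' := isPOVM_eigenProj hρ'.1.1
  have h := hP.vN_le_shannon_born (trace_eigenProj _) hρ'.1
  have h' := hP'.vN_le_shannon_born (trace_eigenProj _) hρ.1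
  rw [abs_le]
  constructor
  · linarith [vN_eq_shannon_born_eigenProj hρ.1.1,
      (abs_le.mp (hP.abs_shannon_born_sub_le hρ hρ' hν htr)).1]
  · linarith [vN_eq_shannon_born_eigenProj hρ'.1.1,
      (abs_le.mp (hP'.abs_shannon_born_sub_le hρ hρ' hν htr)).2]

end VonNeumann

section PiTensor

open Matrix

variable {ι κ : Type*} [Fintype ι]

def piTensor (K : ι → Matrix κ κ ℂ) : Matrix (ι → κ) (ι → κ) ℂ :=
  of fun s t => ∏ n, K n (s n) (t n)

lemma posSemidef_allOnes [Fintype κ] : (of fun _ _ : κ => (1 : ℂ)).PosSemidef := by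
  convert posSemidef_vecMulVec_self_star (1 : κ → ℂ)
  ext
  simp [vecMulVec_apply]

lemma posSemidef_piTensor [DecidableEq ι] [Fintype κ] {K : ι → Matrix κ κ ℂ}
    (hK : ∀ n, (K n).PosSemidef) : (piTensor K).PosSemidef := by
  suffices ∀ S : Finset ι, (of fun s t : ι → κ => ∏ n ∈ S, K n (s n) (t n)).PosSemidef from
    this univ
  intro S
  induction S using Finset.induction_on with
  | empty =>
    simpa using posSemidef_allOnes
  | insert a S ha ih =>
    have hsplit : (of fun s t : ι → κ => ∏ n ∈ insert a S, K n (s n) (t n))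
        = (K a).submatrix (fun s => s a) (fun s => s a) ⊙
          of fun s t : ι → κ => ∏ n ∈ S, K n (s n) (t n) := by
      ext s t
      simp [prod_insert ha, hadamard_apply]
    rw [hsplit]
    exact ((hK a).submatrix _).hadamard ih

lemma piTensor_one [DecidableEq κ] : piTensor (fun _ : ι => (1 : Matrix κ κ ℂ)) = 1 := by
  ext s t
  by_cases hst : s = t
  · subst hst
    simp [piTensor]
  · obtain ⟨n, hn⟩ := Function.ne_iff.mp hst
    simp only [piTensor, of_apply, one_apply_ne hst]
    exact prod_eq_zero (mem_univ n) (one_apply_ne hn)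

lemma piTensor_eq_zero {K : ι → Matrix κ κ ℂ} {n : ι} (hn : K n = 0) : piTensor K = 0 := by
  ext s t
  exact prod_eq_zero (mem_univ n) (by simp [hn])

lemma sum_piTensor [DecidableEq ι] [Fintype κ] (F : ι → κ → Matrix κ κ ℂ) :
    ∑ y : ι → κ, piTensor (fun n => F n (y n)) = piTensor (fun n => ∑ a, F n a) := by
  ext s t
  simp only [piTensor, Matrix.sum_apply, of_apply]
  rw [prod_univ_sum (fun _ => univ), Fintype.piFinset_univ]

end PiTensor

section LocalMeasurement

open Matrix

variable {d : ℕ}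

def basisProj (B : Fin d → Fin d → ℂ) (a : Fin d) : Matrix (Fin d) (Fin d) ℂ :=
  vecMulVec (B a) (star (B a))

lemma ONB.sum_basisProj {B : Fin d → Fin d → ℂ} (hB : ONB B) : ∑ a, basisProj B a = 1 := by
  -- `ONB B` says `Vᴴ V = 1` for the matrix `V` with columns `B a`; hence also `V Vᴴ = 1`
  set V : Matrix (Fin d) (Fin d) ℂ := (of B)ᵀ
  have hV : Vᴴ * V = 1 := by
    ext a b
    simpa [V, mul_apply, one_apply] using hB a b
  have hV' := mul_eq_one_comm.mp hV
  ext i j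
  simpa [V, basisProj, mul_apply, Matrix.sum_apply, vecMulVec_apply] using
    congrFun (congrFun hV' i) j

lemma isPOVM_basisProj {B : Fin d → Fin d → ℂ} (hB : ONB B) : IsPOVM (basisProj B) :=
  ⟨fun a => posSemidef_vecMulVec_self_star (B a), hB.sum_basisProj⟩

lemma ONB_one : ONB (1 : Matrix (Fin d) (Fin d) ℂ) := by
  intro a b
  by_cases hab : a = b <;> simp [one_apply, hab]

end LocalMeasurement

section Protocols

open Matrix

variable {N d : ℕ}

def restrictPrefix (k : ℕ) (s : Fin N → Fin d) : Fin (min k N) → Fin d :=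
  fun i => s (Fin.castLE (Nat.min_le_right _ _) i)

lemma submatrix_one_hadamard_piTensor (k : ℕ) :
    (1 : Matrix (Fin (min k N) → Fin d) _ ℂ).submatrix (restrictPrefix k) (restrictPrefix k) ⊙
      piTensor (fun n : Fin N => if n.val < k then of fun _ _ => 1 else 1) = 1 := by
  ext s t
  by_cases hst : s = t
  · subst hst
    simp only [hadamard_apply, submatrix_apply, one_apply_eq, one_mul, piTensor, of_apply]
    exact prod_eq_one fun n _ => by split_ifs <;> simp
  obtain ⟨n, hn⟩ := Function.ne_iff.mp hst
  rw [hadamard_apply, one_apply_ne hst, mul_eq_zero]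
  by_cases hk : n.val < k
  · left
    refine one_apply_ne fun h => hn ?_
    simpa [restrictPrefix] using congrFun h ⟨n, lt_min hk n.isLt⟩
  · right
    exact prod_eq_zero (mem_univ n) (by simp [hk, one_apply_ne hn])

variable [NeZero d]

def segPOVM (A : Finset (Fin N)) (B : Fin N → Fin d → Fin d → ℂ) (y : Fin N → Fin d) :
    Matrix (Fin N → Fin d) (Fin N → Fin d) ℂ :=
  piTensor fun n => if n ∈ A then basisProj (B n) (y n) else if y n = 0 then 1 else 0

lemma isPOVM_segPOVM (A : Finset (Fin N)) {B : Fin N → Fin d → Fin d → ℂ}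
    (hB : ∀ n, ONB (B n)) : IsPOVM (segPOVM A B) := by
  refine ⟨fun y => posSemidef_piTensor fun n => ?_, ?_⟩
  · split_ifs
    exacts [(isPOVM_basisProj (hB n)).1 _, PosSemidef.one, PosSemidef.zero]
  · simp only [segPOVM]
    rw [sum_piTensor (fun n a => if n ∈ A then basisProj (B n) a else if a = 0 then 1 else 0),
      ← piTensor_one]
    congr 1
    ext1 n
    split_ifs
    · exact (hB n).sum_basisProj
    · simp

lemma segDist_eq_born (ρ : Matrix (Fin N → Fin d) (Fin N → Fin d) ℂ) (A : Finset (Fin N))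
    (B : Fin N → Fin d → Fin d → ℂ) : segDist ρ A B = fun y => born (segPOVM A B y) ρ := by
  ext y
  rw [segDist]
  split_ifs with hpin
  · rw [segProb, born_eq_sum]
    congr 1
    refine sum_congr rfl fun s _ => sum_congr rfl fun t _ => ?_
    congr 1
    refine prod_congr rfl fun n _ => ?_
    by_cases hn : n ∈ A
    · simp [hn, basisProj, vecMulVec_apply]
    · simp [hn, hpin n hn, one_apply]
  · obtain ⟨n, hn, hyn⟩ : ∃ n, n ∉ A ∧ y n ≠ 0 := by simpa using hpin
    rw [segPOVM, piTensor_eq_zero (n := n) (by simp [hn, hyn])]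
    simp [born]

-- The prefix parties carry the all-ones kernel: `E` already acts on them.
def prefSegPOVM (m l : ℕ) {Z : Type*} (E : Z → Matrix (Fin (min (m * l) N) → Fin d)
      (Fin (min (m * l) N) → Fin d) ℂ)
    (B : Fin N → Fin d → Fin d → ℂ) (zy : Z × (Fin N → Fin d)) :
    Matrix (Fin N → Fin d) (Fin N → Fin d) ℂ :=
  (E zy.1).submatrix (restrictPrefix (m * l)) (restrictPrefix (m * l)) ⊙
    piTensor fun n => if n ∈ seg N m l then basisProj (B n) (zy.2 n)
      else if zy.2 n = 0 then (if n.val < m * l then of fun _ _ => 1 else 1) else 0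

lemma isPOVM_prefSegPOVM (m l : ℕ) {Z : Type*} [Fintype Z]
    {E : Z → Matrix (Fin (min (m * l) N) → Fin d) (Fin (min (m * l) N) → Fin d) ℂ}
    (hE : IsPOVM E) {B : Fin N → Fin d → Fin d → ℂ} (hB : ∀ n, ONB (B n)) :
    IsPOVM (prefSegPOVM m l E B) := by
  refine ⟨fun zy => ((hE.1 zy.1).submatrix _).hadamard (posSemidef_piTensor fun n => ?_), ?_⟩
  · split_ifs
    exacts [(isPOVM_basisProj (hB n)).1 _, posSemidef_allOnes, PosSemidef.one, PosSemidef.zero]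
  have hsumY : ∑ y : Fin N → Fin d, piTensor (fun n => if n ∈ seg N m l then basisProj (B n) (y n)
      else if y n = 0 then (if n.val < m * l then of fun _ _ => (1 : ℂ) else 1) else 0)
      = piTensor (fun n : Fin N => if n.val < m * l then of fun _ _ => 1 else 1) := by
    rw [sum_piTensor (fun n a => if n ∈ seg N m l then basisProj (B n) a
      else if a = 0 then (if n.val < m * l then of fun _ _ => (1 : ℂ) else 1) else 0)]
    congr 1
    ext1 n
    by_cases hn : n ∈ seg N m l
    · have : ¬ n.val < m * l := by simp [seg] at hn; omega
      simp [hn, this, (hB n).sum_basisProj]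
    · simp [hn]
  rw [← submatrix_one_hadamard_piTensor (m * l), ← hE.2, ← hsumY]
  ext s t
  simp only [prefSegPOVM, Matrix.sum_apply, hadamard_apply, Fintype.sum_prod_type,
    submatrix_apply, sum_mul_sum]

lemma prefSegDist_eq_born (ρ : Matrix (Fin N → Fin d) (Fin N → Fin d) ℂ) (m l : ℕ)
    {Z : Type} [Fintype Z]
    (E : Z → Matrix (Fin (min (m * l) N) → Fin d) (Fin (min (m * l) N) → Fin d) ℂ)
    (B : Fin N → Fin d → Fin d → ℂ) :
    prefSegDist ρ m l E B = fun zy => born (prefSegPOVM m l E B zy) ρ := by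
  ext zy
  rw [prefSegDist]
  split_ifs with hpin
  · rw [prefSegProb, born_eq_sum]
    congr 1
    refine sum_congr rfl fun s _ => sum_congr rfl fun t _ => ?_
    simp only [prefSegPOVM, hadamard_apply, submatrix_apply, piTensor, of_apply]
    congr 2
    refine prod_congr rfl fun n _ => ?_
    by_cases hn : n ∈ seg N m l
    · simp [hn, basisProj, vecMulVec_apply]
    · by_cases hk : n.val < m * l <;> simp [hn, hk, hpin n hn, one_apply]
  · obtain ⟨n, hn, hyn⟩ : ∃ n, n ∉ seg N m l ∧ zy.2 n ≠ 0 := by simpa using hpin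
    rw [prefSegPOVM, piTensor_eq_zero (n := n) (by simp [hn, hyn])]
    simp [born]

end Protocols

lemma abs_sInf_sub_sInf_le {S T : Set ℝ} {Δ : ℝ} (hS : S.Nonempty) (hT : T.Nonempty)
    (hS0 : BddBelow S) (hT0 : BddBelow T) (hST : ∀ x ∈ S, ∃ y ∈ T, |x - y| ≤ Δ)
    (hTS : ∀ y ∈ T, ∃ x ∈ S, |x - y| ≤ Δ) : |sInf S - sInf T| ≤ Δ := by
  have h1 : sInf S - Δ ≤ sInf T := le_csInf hT fun y hy => by
    obtain ⟨x, hx, hxy⟩ := hTS y hy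
    linarith [csInf_le hS0 hx, (abs_le.mp hxy).2]
  have h2 : sInf T - Δ ≤ sInf S := le_csInf hS fun x hx => by
    obtain ⟨y, hy, hxy⟩ := hST x hx
    linarith [csInf_le hT0 hy, (abs_le.mp hxy).1]
  rw [abs_le]
  constructor <;> linarith

section EntropyMinima

variable {N d : ℕ} [NeZero d]

/-- `{H_Λ(Y_A) : Λ ∈ M_A}`. -/
def segEntropies (ρ : Matrix (Fin N → Fin d) (Fin N → Fin d) ℂ) (A : Finset (Fin N)) :
    Set ℝ :=
  {h | ∃ B : Fin N → Fin d → Fin d → ℂ, (∀ n, ONB (B n)) ∧ h = shannon (segDist ρ A B)}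

/-- `{H_Λ(Y_{m:l} | Z_m) : Λ ∈ N_{m:l}}`. -/
def condEntropies (ρ : Matrix (Fin N → Fin d) (Fin N → Fin d) ℂ) (m l : ℕ) : Set ℝ :=
  {h | ∃ (Z : Type) (_ : Fintype Z)
    (E : Z → Matrix (Fin (min (m * l) N) → Fin d) (Fin (min (m * l) N) → Fin d) ℂ)
    (B : Fin N → Fin d → Fin d → ℂ),
    IsPOVM E ∧ (∀ n, ONB (B n)) ∧ h = condShannon (prefSegDist ρ m l E B)}

lemma Ubound_eq (ρ : Matrix (Fin N → Fin d) (Fin N → Fin d) ℂ) (l : ℕ) :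
    Ubound ρ l = 1 / N * (∑ m ∈ range (N / l), sInf (segEntropies ρ (seg N m l)) - vN ρ) :=
  rfl

lemma Lbound_eq (ρ : Matrix (Fin N → Fin d) (Fin N → Fin d) ℂ) (l : ℕ) :
    Lbound ρ l = 1 / N * (∑ m ∈ range (N / l), sInf (condEntropies ρ m l) - vN ρ) :=
  rfl

variable {ρ ρ' : Matrix (Fin N → Fin d) (Fin N → Fin d) ℂ}

lemma segEntropies_nonempty (ρ : Matrix (Fin N → Fin d) (Fin N → Fin d) ℂ)
    (A : Finset (Fin N)) : (segEntropies ρ A).Nonempty :=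
  ⟨_, fun _ => (1 : Matrix (Fin d) (Fin d) ℂ), fun _ => ONB_one, rfl⟩

lemma condEntropies_nonempty (ρ : Matrix (Fin N → Fin d) (Fin N → Fin d) ℂ) (m l : ℕ) :
    (condEntropies ρ m l).Nonempty :=
  ⟨_, Unit, inferInstance, fun _ => 1, fun _ => (1 : Matrix (Fin d) (Fin d) ℂ),
    ⟨fun _ => Matrix.PosSemidef.one, by simp⟩, fun _ => ONB_one, rfl⟩

lemma bddBelow_segEntropies (hρ : IsDensity ρ) (A : Finset (Fin N)) :
    BddBelow (segEntropies ρ A) := by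
  refine ⟨0, ?_⟩
  rintro _ ⟨B, hB, rfl⟩
  have hE := isPOVM_segPOVM A hB
  rw [segDist_eq_born]
  exact shannon_nonneg (fun y => born_nonneg (hE.1 y) hρ.1) (hE.sum_born hρ.2).le

lemma bddBelow_condEntropies (hρ : IsDensity ρ) (m l : ℕ) :
    BddBelow (condEntropies ρ m l) := by
  refine ⟨0, ?_⟩
  rintro _ ⟨Z, _, E, B, hE, hB, rfl⟩
  have hP := isPOVM_prefSegPOVM m l hE hB
  rw [prefSegDist_eq_born]
  exact condShannon_nonneg fun zy => born_nonneg (hP.1 zy) hρ.1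

lemma abs_sInf_segEntropies_sub_le (hρ : IsDensity ρ) (hρ' : IsDensity ρ') {ν : ℝ}
    (hν : ν ≤ 2) (htr : trNorm (ρ - ρ') ≤ ν) (A : Finset (Fin N)) :
    |sInf (segEntropies ρ A) - sInf (segEntropies ρ' A)|
      ≤ Fintype.card (Fin N → Fin d) * fannesModulus ν := by
  have hclose : ∀ B, (∀ n, ONB (B n)) →
      |shannon (segDist ρ A B) - shannon (segDist ρ' A B)|
        ≤ Fintype.card (Fin N → Fin d) * fannesModulus ν := fun B hB => by
    simpa only [segDist_eq_born] using
      (isPOVM_segPOVM A hB).abs_shannon_born_sub_le hρ hρ' hν htr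
  refine abs_sInf_sub_sInf_le (segEntropies_nonempty ρ A) (segEntropies_nonempty ρ' A)
    (bddBelow_segEntropies hρ A) (bddBelow_segEntropies hρ' A) ?_ ?_
  all_goals
    rintro _ ⟨B, hB, rfl⟩
    exact ⟨_, ⟨B, hB, rfl⟩, hclose B hB⟩

lemma abs_sInf_condEntropies_sub_le (hρ : IsDensity ρ) (hρ' : IsDensity ρ') {ν : ℝ}
    (hν : ν ≤ 1) (htr : trNorm (ρ - ρ') ≤ ν) (m l : ℕ) :
    |sInf (condEntropies ρ m l) - sInf (condEntropies ρ' m l)|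
      ≤ log (Fintype.card (Fin N → Fin d)) * ν
        + Fintype.card (Fin N → Fin d) * fannesModulus (2 * ν) := by
  have hclose : ∀ {Z : Type} [Fintype Z] E B, IsPOVM E → (∀ n, ONB (B n)) →
      |condShannon (prefSegDist (Z := Z) ρ m l E B) - condShannon (prefSegDist ρ' m l E B)|
        ≤ log (Fintype.card (Fin N → Fin d)) * ν
          + Fintype.card (Fin N → Fin d) * fannesModulus (2 * ν) := fun E B hE hB => by
    simpa only [prefSegDist_eq_born] using
      (isPOVM_prefSegPOVM m l hE hB).abs_condShannon_born_sub_le hρ hρ' hν htr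
  refine abs_sInf_sub_sInf_le (condEntropies_nonempty ρ m l) (condEntropies_nonempty ρ' m l)
    (bddBelow_condEntropies hρ m l) (bddBelow_condEntropies hρ' m l) ?_ ?_
  all_goals
    rintro _ ⟨Z, _, E, B, hE, hB, rfl⟩
    exact ⟨_, ⟨Z, _, E, B, hE, hB, rfl⟩, hclose E B hE hB⟩

end EntropyMinima

lemma abs_averaged_sum_sub_le (N n : ℕ) {a b : ℕ → ℝ} {v w ε : ℝ} (hab : ∀ m, |a m - b m| ≤ ε)
    (hvw : |v - w| ≤ ε) :
    |1 / N * (∑ m ∈ range n, a m - v) - 1 / N * (∑ m ∈ range n, b m - w)| ≤ (n + 1) * ε := by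
  have hN0 : (0 : ℝ) ≤ 1 / N := by positivity
  have hN1 : 1 / (N : ℝ) ≤ 1 := by
    rcases N.eq_zero_or_pos with rfl | hN
    · simp
    · exact (div_le_one (by exact_mod_cast hN)).mpr (by exact_mod_cast hN)
  have hsum : |∑ m ∈ range n, (a m - b m)| ≤ n * ε :=
    (abs_sum_le_sum_abs _ _).trans (by simpa using sum_le_sum fun m (_ : m ∈ range n) => hab m)
  have hdiff : ∑ m ∈ range n, a m - v - (∑ m ∈ range n, b m - w)
      = ∑ m ∈ range n, (a m - b m) - (v - w) := by
    rw [sum_sub_distrib]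
    ring
  rw [← mul_sub, hdiff, abs_mul, abs_of_nonneg hN0]
  calc 1 / N * |∑ m ∈ range n, (a m - b m) - (v - w)|
      ≤ 1 * |∑ m ∈ range n, (a m - b m) - (v - w)| :=
        mul_le_mul_of_nonneg_right hN1 (abs_nonneg _)
    _ ≤ (n + 1) * ε := by
        rw [one_mul]
        linarith [abs_sub (∑ m ∈ range n, (a m - b m)) (v - w)]

lemma fannesModulus_two_mul_le {ν : ℝ} (hν0 : 0 < ν) (hν1 : ν ≤ 1) :
    fannesModulus (2 * ν) ≤ 4 * (ν * (1 - log ν)) := by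
  have hlog2 : 0 ≤ log 2 := log_nonneg one_le_two
  rw [fannesModulus, log_mul two_ne_zero hν0.ne']
  nlinarith [log_nonpos hν0.le hν1]

theorem bounds_continuous_in_state_general {N d : ℕ} [NeZero d] (l : ℕ) :
    ∃ C > (0 : ℝ), ∀ (ρ ρ' : Matrix (Fin N → Fin d) (Fin N → Fin d) ℂ) (ν : ℝ),
      IsDensity ρ → IsDensity ρ' → 0 < ν → ν ≤ 1 → trNorm (ρ - ρ') ≤ ν →
      |Ubound ρ l - Ubound ρ' l| ≤ C * ν * (1 - Real.log ν) ∧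
      |Lbound ρ l - Lbound ρ' l| ≤ C * ν * (1 - Real.log ν) := by
  set K : ℝ := (Fintype.card (Fin N → Fin d) : ℝ)
  have hK : 1 ≤ K := Nat.one_le_cast.mpr Fintype.card_pos
  have hlogK : 0 ≤ log K := log_nonneg hK
  refine ⟨((N / l : ℕ) + 1) * (log K + 4 * K), by positivity, ?_⟩
  intro ρ ρ' ν hρ hρ' hν0 hν1 htr
  set ε := (log K + 4 * K) * (ν * (1 - log ν))
  have hνε : ν ≤ ν * (1 - log ν) := by nlinarith [log_nonpos hν0.le hν1]
  have hψ2 : K * fannesModulus (2 * ν) ≤ 4 * K * (ν * (1 - log ν)) := by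
    nlinarith [fannesModulus_two_mul_le hν0 hν1]
  have hψ : K * fannesModulus ν ≤ ε := by
    have := fannesModulus_le_fannesModulus hν0.le (by linarith : ν ≤ 2 * ν) (by linarith)
    nlinarith
  have hvN := (abs_vN_sub_le hρ hρ' (by linarith) htr).trans hψ
  constructor
  · rw [Ubound_eq, Ubound_eq]
    refine (abs_averaged_sum_sub_le N (N / l) (fun m => ?_) hvN).trans_eq (by ring)
    exact (abs_sInf_segEntropies_sub_le hρ hρ' (by linarith) htr _).trans hψ
  · rw [Lbound_eq, Lbound_eq]
    refine (abs_averaged_sum_sub_le N (N / l) (fun m => ?_) hvN).trans_eq (by ring)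
    refine (abs_sInf_condEntropies_sub_le hρ hρ' hν1 htr m l).trans ?_
    nlinarith

/-- Continuity of the upper and lower bounds of the work deficit density in the state with
respect to the trace distance: if `‖ρ − ρ′‖_tr ≤ ν` then
`|U_l(ρ) − U_l(ρ′)| ≤ Õ(ν)` and `|L_l(ρ) − L_l(ρ′)| ≤ Õ(ν)`, with `Õ(ν) = O(ν ln ν)`
realized by the bound `C·ν·(1 − ln ν)` for a constant `C` (depending only on `N`, `d`, `l`). -/
theorem bounds_continuous_in_state {N d : ℕ} [NeZero d] (l : ℕ) (hl : 0 < l) (hdvd : l ∣ N) :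
    ∃ C > (0 : ℝ), ∀ (ρ ρ' : Matrix (Fin N → Fin d) (Fin N → Fin d) ℂ) (ν : ℝ),
      IsDensity ρ → IsDensity ρ' → 0 < ν → ν ≤ 1 → trNorm (ρ - ρ') ≤ ν →
      |Ubound ρ l - Ubound ρ' l| ≤ C * ν * (1 - Real.log ν) ∧
      |Lbound ρ l - Lbound ρ' l| ≤ C * ν * (1 - Real.log ν) :=
  bounds_continuous_in_state_general l
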